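/- arXiv:2107.07202 — 2 statements merged into one kernel-verified Lean document; each statement's English description precedes it below -/
import Mathlib

section
/- Let i ∈ I and l, r ∈ ℤ. Then σ^l(i) ≠ σ^r(i) in either of the following cases: (1) |χ| = ∞ and l ≠ r; (2) |q| = s < ∞ and s does not divide l − r, where q = χ(a) and |q| is the multiplicative order of q. -/
open scoped TensorProduct

namespace HopfOrePaper

/-- A representation of `G` on `V` is simple (irreducible): `V ≠ 0` and the only
`G`-stable subspaces are `0` and `V`. -/
def IsSimpleRep {k G V : Type} [Field k] [Group G] [AddCommGroup V] [Module k V]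
    (ρ : Representation k G V) : Prop :=
  Nontrivial V ∧ ∀ p : Submodule k V, (∀ g : G, ∀ v ∈ p, ρ g v ∈ p) → p = ⊥ ∨ p = ⊤

/-- Isomorphism of representations. -/
def RepIso {k G V V' : Type} [Field k] [Group G] [AddCommGroup V] [Module k V]
    [AddCommGroup V'] [Module k V'] (ρ : Representation k G V)
    (ρ' : Representation k G V') : Prop :=
  ∃ f : V ≃ₗ[k] V', ∀ (g : G) (v : V), f (ρ g v) = ρ' g (f v)

/-- `IsTwistIso χ t ρ ρ'` says that `ρ' ≅ V_{χ^t} ⊗ ρ` as representations of `G`. -/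
def IsTwistIso {k G V V' : Type} [Field k] [Group G] [AddCommGroup V] [Module k V]
    [AddCommGroup V'] [Module k V'] (χ : G →* kˣ) (t : ℤ)
    (ρ : Representation k G V) (ρ' : Representation k G V') : Prop :=
  ∃ f : V ≃ₗ[k] V', ∀ (g : G) (v : V), ρ' g (f v) = ((χ g ^ t : kˣ) : k) • f (ρ g v)

/-- `ρ` and `ρ'` lie in the same class of the equivalence `∼` on simple modules,
i.e. `ρ' ≅ V_{χ^t} ⊗ ρ` for some `t ∈ ℤ` (i.e. `[i] = [j]`). -/
def TwistEquiv {k G V V' : Type} [Field k] [Group G] [AddCommGroup V] [Module k V]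
    [AddCommGroup V'] [Module k V'] (χ : G →* kˣ)
    (ρ : Representation k G V) (ρ' : Representation k G V') : Prop :=
  ∃ t : ℤ, IsTwistIso χ t ρ ρ'

/-- A presentation of the Hopf–Ore extension `H = kG(χ⁻¹, a, 0)`:
`H` is a `k`-algebra containing the group algebra `kG` and an element `x` with
`x·g = χ⁻¹(g)·g·x`, and with `k`-basis `{g xⁱ | g ∈ G, i ∈ ℕ}`. -/
structure HopfOre (k G H : Type) [Field k] [Group G] [Ring H] [Algebra k H]
    (χ : G →* kˣ) : Type where
  emb : MonoidAlgebra k G →ₐ[k] H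
  x : H
  comm_rel : ∀ g : G, x * emb (MonoidAlgebra.of k G g)
      = (((χ g)⁻¹ : kˣ) : k) • (emb (MonoidAlgebra.of k G g) * x)
  basis_li : LinearIndependent k fun p : G × ℕ => emb (MonoidAlgebra.of k G p.1) * x ^ p.2
  basis_span :
    Submodule.span k (Set.range fun p : G × ℕ => emb (MonoidAlgebra.of k G p.1) * x ^ p.2) = ⊤

variable {k G H : Type} [Field k] [Group G] [Ring H] [Algebra k H] {χ : G →* kˣ}

/-- `IsStdQuot HO ρ e c d` says that the `H`-module `W` is (a copy of) the quotient module
`M(V)/cM(V)` of `M(V) = H ⊗_{kG} V`, where `c` is a (central) polynomial in `x` of degree `d`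
(of the form `x^t` or `(x^s - β)^r`): `e` is a `kG`-equivariant embedding of `V` into `W`,
`c` annihilates `W`, and `W = ⊕_{j=0}^{d-1} xʲ·e(V)`. -/
structure IsStdQuot (HO : HopfOre k G H χ) {V W : Type}
    [AddCommGroup V] [Module k V]
    [AddCommGroup W] [Module k W] [Module H W] [IsScalarTower k H W]
    (ρ : Representation k G V) (e : V →ₗ[k] W) (c : H) (d : ℕ) : Prop where
  equivariant : ∀ (g : G) (v : V), e (ρ g v) = HO.emb (MonoidAlgebra.of k G g) • e v
  ann : ∀ w : W, c • w = 0
  xbasis : Function.Bijective fun f : Fin d → V => ∑ j : Fin d, HO.x ^ (j : ℕ) • e (f j)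

/-- A witness exhibiting the `H`-module `W` as a standard quotient module
`M(V_i)/cM(V_i)` for some finite-dimensional simple `kG`-module `V_i`. -/
structure StdWitness (HO : HopfOre k G H χ) (W : Type)
    [AddCommGroup W] [Module k W] [Module H W] [IsScalarTower k H W]
    (c : H) (d : ℕ) : Type 1 where
  V : Type
  [acg : AddCommGroup V]
  [modk : Module k V]
  ρ : Representation k G V
  fin : FiniteDimensional k V
  simple : IsSimpleRep ρ
  e : V →ₗ[k] W
  std : IsStdQuot HO ρ e c d

/-- The representation of `G` obtained from an `H`-module by restriction along
`kG → H`. -/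
noncomputable def resRep (HO : HopfOre k G H χ) (M : Type) [AddCommGroup M] [Module k M]
    [Module H M] [IsScalarTower k H M] : Representation k G M where
  toFun g :=
    { toFun := fun m => HO.emb (MonoidAlgebra.of k G g) • m
      map_add' := fun m n => smul_add _ m n
      map_smul' := fun c m => by
        simp only [RingHom.id_apply]
        exact (smul_comm c (HO.emb (MonoidAlgebra.of k G g)) m).symm }
  map_one' := by
    ext m
    simp only [LinearMap.coe_mk, AddHom.coe_mk, LinearMap.id_coe, id_eq, Module.End.one_apply]
    rw [map_one, map_one, one_smul]
  map_mul' g h := by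
    ext m
    simp only [LinearMap.coe_mk, AddHom.coe_mk, Module.End.mul_apply]
    rw [map_mul, map_mul, mul_smul]

/-- A module over a ring is indecomposable. -/
def IsIndecomposableMod (R M : Type) [Ring R] [AddCommGroup M] [Module R M] : Prop :=
  Nontrivial M ∧ ∀ p q : Submodule R M, IsCompl p q → p = ⊥ ∨ q = ⊥

/-- A module is uniserial if its submodules form a chain. -/
def IsUniserial (R M : Type) [Ring R] [AddCommGroup M] [Module R M] : Prop :=
  ∀ p q : Submodule R M, p ≤ q ∨ q ≤ p

/-- The radical of a module: the intersection of its maximal submodules. -/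
def modRadical (R M : Type) [Ring R] [AddCommGroup M] [Module R M] : Submodule R M :=
  sInf {p : Submodule R M | IsCoatom p}

/-- The socle of a module: the sum of its simple submodules. -/
def modSocle (R M : Type) [Ring R] [AddCommGroup M] [Module R M] : Submodule R M :=
  sSup {p : Submodule R M | IsAtom p}

/-- The radical series `M ⊇ rad M ⊇ rad² M ⊇ ⋯` of a module. -/
noncomputable def radIter (R M : Type) [Ring R] [AddCommGroup M] [Module R M] :
    ℕ → Submodule R M
  | 0 => ⊤
  | j + 1 => Submodule.map (radIter R M j).subtype (modRadical R (radIter R M j))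

/-- The submodule `c•M` of a module `M` (for `c` a central, or normalizing, element). -/
def smulRange {M : Type} (R : Type) [Ring R] [AddCommGroup M] [Module R M] (c : R) :
    Submodule R M :=
  Submodule.span R (Set.range fun m : M => c • m)

/-- The subquotient `q/p` associated with submodules `p ≤ q`. -/
abbrev sectionQuot {R M : Type} [Ring R] [AddCommGroup M] [Module R M]
    (p q : Submodule R M) :=
  ↥q ⧸ (Submodule.comap q.subtype p)

/-- The hypothesis that a given `H`-module structure on `M ⊗[k] N` is the one obtained
from the `H`-module structures of `M` and `N` via the comultiplication of
`H = kG(χ⁻¹,a,0)`, i.e. `Δ(g) = g ⊗ g` and `Δ(x) = x ⊗ a + 1 ⊗ x`. -/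
structure TensorAct (HO : HopfOre k G H χ) (a : G) (M N : Type)
    [AddCommGroup M] [Module k M] [Module H M] [IsScalarTower k H M]
    [AddCommGroup N] [Module k N] [Module H N] [IsScalarTower k H N]
    [Module H (M ⊗[k] N)] [IsScalarTower k H (M ⊗[k] N)] : Prop where
  g_tmul : ∀ (g : G) (m : M) (n : N),
    HO.emb (MonoidAlgebra.of k G g) • (m ⊗ₜ[k] n)
      = (HO.emb (MonoidAlgebra.of k G g) • m) ⊗ₜ[k] (HO.emb (MonoidAlgebra.of k G g) • n)
  x_tmul : ∀ (m : M) (n : N),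
    HO.x • (m ⊗ₜ[k] n)
      = (HO.x • m) ⊗ₜ[k] (HO.emb (MonoidAlgebra.of k G a) • n) + m ⊗ₜ[k] (HO.x • n)

/-- The twist of a representation by the `t`-th power of a character: this is the
representation `V_{χ^t} ⊗ ρ`, realized on the same space (`σ^t` applied to `ρ`). -/
def twistRep {k G V : Type} [Field k] [Group G] [AddCommGroup V] [Module k V]
    (χ : G →* kˣ) (t : ℤ) (ρ : Representation k G V) : Representation k G V where
  toFun g := ((χ g ^ t : kˣ) : k) • ρ g
  map_one' := by simp
  map_mul' g h := by
    ext v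
    simp only [map_mul, mul_zpow, Units.val_mul, LinearMap.smul_apply, Module.End.mul_apply,
      map_smul, smul_smul, mul_comm]

/-- The one-dimensional representation attached to a linear character. -/
def charRep (k : Type) {G : Type} [Field k] [Group G] (μ : G →* kˣ) :
    Representation k G k where
  toFun g := ((μ g : k) • LinearMap.id)
  map_one' := by
    simp only [map_one, Units.val_one, one_smul]
    rfl
  map_mul' g h := by
    ext
    simp [mul_smul, mul_comm]

/-- `SubRepIso ρT p ρ` : `p` is a `G`-stable subspace of the representation `ρT`
and, as a representation of `G`, it is isomorphic to `ρ`. -/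
def SubRepIso {k G X V : Type} [Field k] [Group G] [AddCommGroup X] [Module k X]
    [AddCommGroup V] [Module k V]
    (ρT : Representation k G X) (p : Submodule k X) (ρ : Representation k G V) : Prop :=
  (∀ g : G, ∀ y ∈ p, ρT g y ∈ p) ∧
  ∃ f : V ≃ₗ[k] ↥p, ∀ (g : G) (v : V), (f (ρ g v) : X) = ρT g (f v)

/-!
If `V ≅ V_{χ^t} ⊗ V`, then `ρ g` is conjugate to `χ(g)^t ρ g`; comparing determinants gives
`χ^(t · dim V) = 1`, so `χ` has finite order as soon as `t ≠ 0`. On the other hand the central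
element `a` acts on the simple module `V` by a nonzero scalar (Schur), and the twist multiplies
that scalar by `χ(a)^t`, so `χ(a)^t = 1` and `|q|` divides `t`.
-/

section

variable {V : Type} [AddCommGroup V] [Module k V] {t : ℤ} {ρ : Representation k G V} {a : G}

theorem IsTwistIso.conj_eq_smul (h : IsTwistIso χ t ρ ρ) (g : G) :
    ∃ f : V ≃ₗ[k] V, ρ g = ((χ g ^ t : kˣ) : k) • ((f : V →ₗ[k] V) ∘ₗ ρ g ∘ₗ f.symm) := by
  obtain ⟨f, hf⟩ := h
  refine ⟨f, LinearMap.ext fun v => ?_⟩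
  simpa using hf g (f.symm v)

theorem IsTwistIso.zpow_mul_finrank_eq_one (h : IsTwistIso χ t ρ ρ) (g : G) :
    χ g ^ (t * Module.finrank k V) = 1 := by
  obtain ⟨f, hconj⟩ := h.conj_eq_smul g
  have hdet := congrArg LinearMap.det hconj
  rw [LinearMap.det_smul, LinearMap.det_conj] at hdet
  have hunit : IsUnit (LinearMap.det (ρ g)) :=
    LinearMap.isUnit_det _ ((Group.isUnit g).map ρ)
  have hpow : ((χ g ^ t : kˣ) : k) ^ Module.finrank k V = 1 :=
    hunit.mul_eq_right.mp hdet.symm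
  rw [zpow_mul, zpow_natCast, ← Units.val_eq_one, Units.val_pow_eq_pow_val, hpow]

theorem IsTwistIso.isOfFinOrder [FiniteDimensional k V] [Nontrivial V]
    (h : IsTwistIso χ t ρ ρ) (ht : t ≠ 0) : IsOfFinOrder χ := by
  refine isOfFinOrder_iff_zpow_eq_one (x := χ) |>.mpr ⟨t * Module.finrank k V, ?_, ?_⟩
  · exact mul_ne_zero ht (Int.natCast_ne_zero.mpr Module.finrank_pos.ne')
  · ext g
    simp [h.zpow_mul_finrank_eq_one g]

theorem IsSimpleRep.exists_eq_smul_of_mem_center [IsAlgClosed k] [FiniteDimensional k V]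
    (hρ : IsSimpleRep ρ) (ha : a ∈ Subgroup.center G) :
    ∃ c : k, c ≠ 0 ∧ ∀ v : V, ρ a v = c • v := by
  obtain ⟨hV, hsimple⟩ := hρ
  obtain ⟨c, hc⟩ := Module.End.exists_eigenvalue (ρ a)
  have hstable : ∀ g : G, ∀ v ∈ Module.End.eigenspace (ρ a) c,
      ρ g v ∈ Module.End.eigenspace (ρ a) c := by
    intro g v hv
    rw [Module.End.mem_eigenspace_iff] at hv ⊢
    rw [← Module.End.mul_apply, ← map_mul, ← Subgroup.mem_center_iff.mp ha g, map_mul,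
      Module.End.mul_apply, hv, map_smul]
  have heig : Module.End.eigenspace (ρ a) c = ⊤ :=
    (hsimple _ hstable).resolve_left hc
  have hscalar : ∀ v : V, ρ a v = c • v := fun v =>
    Module.End.mem_eigenspace_iff.mp (heig ▸ Submodule.mem_top)
  refine ⟨c, ?_, hscalar⟩
  rintro rfl
  obtain ⟨v, hv⟩ := exists_ne (0 : V)
  exact hv (by simpa [hscalar v] using (ρ.inv_self_apply a v).symm)

theorem IsTwistIso.zpow_eq_one_of_mem_center [IsAlgClosed k] [FiniteDimensional k V]
    (h : IsTwistIso χ t ρ ρ) (hρ : IsSimpleRep ρ) (ha : a ∈ Subgroup.center G) :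
    χ a ^ t = 1 := by
  obtain ⟨c, hc, hscalar⟩ := hρ.exists_eq_smul_of_mem_center ha
  obtain ⟨f, hf⟩ := h
  have : Nontrivial V := hρ.1
  obtain ⟨v, hv⟩ := exists_ne (0 : V)
  have hfv : f v ≠ 0 := f.map_ne_zero_iff.mpr hv
  have heq : (1 * c) • f v = (((χ a ^ t : kˣ) : k) * c) • f v := by
    rw [one_mul, ← hscalar, hf, hscalar, map_smul, smul_smul]
  exact Units.val_eq_one.mp (mul_right_cancel₀ hc (smul_left_injective k hfv heq).symm)

end

theorem stmt_1_general {k G V : Type} [Field k] [IsAlgClosed k] [Group G]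
    [AddCommGroup V] [Module k V] [FiniteDimensional k V]
    (χ : G →* kˣ) (a : G) (ha : a ∈ Subgroup.center G)
    (ρ : Representation k G V) (hρ : IsSimpleRep ρ) (l r : ℤ)
    (h : (¬ IsOfFinOrder χ ∧ l ≠ r) ∨
      (IsOfFinOrder (χ a) ∧ ¬ ((orderOf (χ a) : ℤ) ∣ l - r))) :
    ¬ IsTwistIso χ (l - r) ρ ρ := by
  intro htwist
  rcases h with ⟨hinf, hlr⟩ | ⟨-, hndvd⟩
  · have : Nontrivial V := hρ.1
    exact hinf (htwist.isOfFinOrder (sub_ne_zero.mpr hlr))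
  · exact hndvd (orderOf_dvd_iff_zpow_eq_one.mpr (htwist.zpow_eq_one_of_mem_center hρ ha))

/-- **Lemma 3.2.** Let `V_i` be a simple finite-dimensional `kG`-module and `l, r ∈ ℤ`.
Then `σ^l(i) ≠ σ^r(i)` (that is, `V_i` is not isomorphic to its twist by `χ^(l-r)`)
if `|χ| = ∞` and `l ≠ r`, or if `|q| = s < ∞` and `s ∤ l - r`, where `q = χ(a)`. -/
theorem stmt_1 {k G V : Type} [Field k] [IsAlgClosed k] [Group G]
    [AddCommGroup V] [Module k V] [FiniteDimensional k V]
    (χ : G →* kˣ) (a : G) (ha : a ∈ Subgroup.center G) (hχa : χ a ≠ 1)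
    (ρ : Representation k G V) (hρ : IsSimpleRep ρ) (l r : ℤ)
    (h : (¬ IsOfFinOrder χ ∧ l ≠ r) ∨
      (IsOfFinOrder (χ a) ∧ ¬ ((orderOf (χ a) : ℤ) ∣ l - r))) :
    ¬ IsTwistIso χ (l - r) ρ ρ :=
  stmt_1_general χ a ha ρ hρ l r h

end HopfOrePaper
end

section
/- Assume kG is finite dimensional and semisimple. Let i, j ∈ I and n, t ≥ 1. Then V_t(i) ≅ V_n(j) as H-modules if and only if t = n and i = j. -/
open scoped TensorProduct

namespace HopfOrePaper

variable {k G H : Type} [Field k] [Group G] [Ring H] [Algebra k H] {χ : G →* kˣ}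

/-!
The element `x` acts on `V_t(i) = ⊕_{j<t} xʲ V_i` as a shift, so its nilpotency index is exactly
`t`, and `V_t(i) / x V_t(i) ≅ V_i` as `kG`-modules; an `H`-isomorphism preserves both. Conversely,
a `kG`-isomorphism `V_i ≅ V_j` applied coordinatewise commutes with `G` and with `x`, which
generate `H`.
-/

namespace HopfOre

variable (HO : HopfOre k G H χ)

theorem of_mul_x_pow (g : G) (j : ℕ) :
    HO.emb (MonoidAlgebra.of k G g) * HO.x ^ j
      = ((χ g ^ j : kˣ) : k) • (HO.x ^ j * HO.emb (MonoidAlgebra.of k G g)) := by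
  have of_mul_x : HO.emb (MonoidAlgebra.of k G g) * HO.x
      = ((χ g : kˣ) : k) • (HO.x * HO.emb (MonoidAlgebra.of k G g)) := by
    rw [HO.comm_rel g, smul_smul, ← Units.val_mul, mul_inv_cancel, Units.val_one, one_smul]
  induction j with
  | zero => simp
  | succ j ih =>
    rw [pow_succ, ← mul_assoc, ih, smul_mul_assoc, mul_assoc, of_mul_x, mul_smul_comm, smul_smul,
      ← Units.val_mul, ← pow_succ, ← mul_assoc, ← pow_succ]

variable {M N : Type} [AddCommGroup M] [Module k M] [Module H M] [IsScalarTower k H M]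
  [AddCommGroup N] [Module k N] [Module H N] [IsScalarTower k H N]

theorem map_smul_of_commute (f : M →ₗ[k] N)
    (hg : ∀ (g : G) (m : M),
      f (HO.emb (MonoidAlgebra.of k G g) • m) = HO.emb (MonoidAlgebra.of k G g) • f m)
    (hx : ∀ m : M, f (HO.x • m) = HO.x • f m) (h : H) (m : M) :
    f (h • m) = h • f m := by
  have hxpow (i : ℕ) (m : M) : f (HO.x ^ i • m) = HO.x ^ i • f m := by
    induction i generalizing m with
    | zero => simp
    | succ i ih => rw [pow_succ', mul_smul, mul_smul, hx, ih]
  have hmem : h ∈ Submodule.span k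
      (Set.range fun p : G × ℕ => HO.emb (MonoidAlgebra.of k G p.1) * HO.x ^ p.2) := by
    rw [HO.basis_span]; trivial
  induction hmem using Submodule.span_induction with
  | mem z hz =>
    obtain ⟨⟨g, i⟩, rfl⟩ := hz
    rw [mul_smul, mul_smul, hg, hxpow]
  | zero => rw [zero_smul, zero_smul, map_zero]
  | add y z _ _ ihy ihz => rw [add_smul, add_smul, map_add, ihy, ihz]
  | smul c z _ ih => rw [smul_assoc, smul_assoc, map_smul, ih]

noncomputable def linearEquivOfCommute (f : M ≃ₗ[k] N)
    (hg : ∀ (g : G) (m : M),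
      f (HO.emb (MonoidAlgebra.of k G g) • m) = HO.emb (MonoidAlgebra.of k G g) • f m)
    (hx : ∀ m : M, f (HO.x • m) = HO.x • f m) : M ≃ₗ[H] N :=
  { f.toAddEquiv with map_smul' := HO.map_smul_of_commute f.toLinearMap hg hx }

variable {V : Type} [AddCommGroup V] [Module k V]

noncomputable def xSum (e : V →ₗ[k] M) (d : ℕ) : (Fin d → V) →ₗ[k] M where
  toFun u := ∑ j : Fin d, HO.x ^ (j : ℕ) • e (u j)
  map_add' u v := by
    simp only [Pi.add_apply, map_add, smul_add, Finset.sum_add_distrib]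
  map_smul' c u := by
    simp only [Pi.smul_apply, map_smul, RingHom.id_apply, Finset.smul_sum, smul_comm c]

theorem xSum_apply (e : V →ₗ[k] M) (d : ℕ) (u : Fin d → V) :
    HO.xSum e d u = ∑ j : Fin d, HO.x ^ (j : ℕ) • e (u j) := rfl

theorem xSum_single (e : V →ₗ[k] M) {d : ℕ} (j : Fin d) (v : V) :
    HO.xSum e d (Pi.single j v) = HO.x ^ (j : ℕ) • e v := by
  rw [xSum_apply, Fintype.sum_eq_single j fun i hi => by simp [hi]]
  simp

end HopfOre

namespace IsStdQuot

variable {HO : HopfOre k G H χ} {V W : Type} [AddCommGroup V] [Module k V]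
  [AddCommGroup W] [Module k W] [Module H W] [IsScalarTower k H W]
  {ρ : Representation k G V} {e : V →ₗ[k] W} {c : H} {d : ℕ}

noncomputable def equiv (hW : IsStdQuot HO ρ e c d) : (Fin d → V) ≃ₗ[k] W :=
  LinearEquiv.ofBijective (HO.xSum e d) hW.xbasis

@[simp]
theorem equiv_apply (hW : IsStdQuot HO ρ e c d) (u : Fin d → V) :
    hW.equiv u = HO.xSum e d u := rfl

theorem of_smul_xSum (hW : IsStdQuot HO ρ e c d) (g : G) (u : Fin d → V) :
    HO.emb (MonoidAlgebra.of k G g) • HO.xSum e d u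
      = HO.xSum e d fun j => ((χ g ^ (j : ℕ) : kˣ) : k) • ρ g (u j) := by
  simp only [HopfOre.xSum_apply, Finset.smul_sum]
  refine Finset.sum_congr rfl fun j _ => ?_
  rw [← mul_smul, HO.of_mul_x_pow, smul_assoc, mul_smul, ← hW.equivariant, map_smul, smul_comm]

/-- The top coordinate `u_m` is lost because `x^{m+1}` kills `W`. -/
theorem x_smul_xSum {m : ℕ} (hW : IsStdQuot HO ρ e (HO.x ^ (m + 1)) (m + 1))
    (u : Fin (m + 1) → V) :
    HO.x • HO.xSum e (m + 1) u = HO.xSum e (m + 1) (Fin.cons 0 (Fin.init u)) := by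
  rw [HopfOre.xSum_apply, HopfOre.xSum_apply, Finset.smul_sum, Fin.sum_univ_castSucc,
    Fin.sum_univ_succ]
  simp only [Fin.cons_zero, Fin.cons_succ, Fin.init, map_zero, smul_zero, zero_add,
    Fin.val_castSucc, Fin.val_succ, Fin.val_last, ← mul_smul, ← pow_succ']
  rw [hW.ann, add_zero]

theorem x_pow_mem_annihilator_iff [Nontrivial V] (hW : IsStdQuot HO ρ e (HO.x ^ d) d) {j : ℕ} :
    HO.x ^ j ∈ Module.annihilator H W ↔ d ≤ j := by
  rw [Module.mem_annihilator]
  constructor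
  · intro hj
    by_contra! hjd
    obtain ⟨v, hv⟩ := exists_ne (0 : V)
    have hsingle : HO.xSum e d (Pi.single ⟨j, hjd⟩ v) = HO.xSum e d 0 := by
      rw [HO.xSum_single, hj, map_zero]
    exact hv (by simpa using congrFun (hW.xbasis.injective hsingle) ⟨j, hjd⟩)
  · intro hdj w
    rw [← Nat.sub_add_cancel hdj, pow_add, mul_smul, hW.ann, smul_zero]

theorem eq_of_annihilator_eq [Nontrivial V] (hW : IsStdQuot HO ρ e (HO.x ^ d) d)
    {V' W' : Type} [AddCommGroup V'] [Module k V'] [Nontrivial V']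
    [AddCommGroup W'] [Module k W'] [Module H W'] [IsScalarTower k H W']
    {ρ' : Representation k G V'} {e' : V' →ₗ[k] W'} {d' : ℕ}
    (hW' : IsStdQuot HO ρ' e' (HO.x ^ d') d')
    (h : Module.annihilator H W = Module.annihilator H W') : d = d' := by
  have key (j : ℕ) : d ≤ j ↔ d' ≤ j := by
    rw [← hW.x_pow_mem_annihilator_iff, ← hW'.x_pow_mem_annihilator_iff, h]
  exact le_antisymm ((key d').mpr le_rfl) ((key d).mp le_rfl)

section head

variable {m : ℕ} (hW : IsStdQuot HO ρ e c (m + 1))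

/-- The coordinate in the summand `e(V)`; it identifies `W / xW` with `V`. -/
noncomputable def head : W →ₗ[k] V :=
  LinearMap.proj 0 ∘ₗ hW.equiv.symm.toLinearMap

theorem head_xSum (u : Fin (m + 1) → V) : hW.head (HO.xSum e (m + 1) u) = u 0 := by
  show hW.equiv.symm (hW.equiv u) 0 = u 0
  rw [LinearEquiv.symm_apply_apply]

theorem head_e (v : V) : hW.head (e v) = v := by
  simpa [HO.xSum_single] using hW.head_xSum (Pi.single 0 v)

theorem head_of_smul (g : G) (w : W) :
    hW.head (HO.emb (MonoidAlgebra.of k G g) • w) = ρ g (hW.head w) := by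
  obtain ⟨u, rfl⟩ := hW.equiv.surjective w
  rw [equiv_apply, hW.of_smul_xSum, head_xSum, head_xSum, Fin.val_zero, pow_zero, Units.val_one,
    one_smul]

theorem exists_eq_e_head_add_x_smul (w : W) : ∃ w' : W, w = e (hW.head w) + HO.x • w' := by
  obtain ⟨u, rfl⟩ := hW.equiv.surjective w
  refine ⟨∑ j : Fin m, HO.x ^ (j : ℕ) • e (u j.succ), ?_⟩
  rw [equiv_apply, hW.head_xSum]
  simp only [HopfOre.xSum_apply, Fin.sum_univ_succ, Finset.smul_sum,
    Fin.val_zero, pow_zero, one_smul, Fin.val_succ, pow_succ', mul_smul]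

end head

theorem head_x_smul {m : ℕ} (hW : IsStdQuot HO ρ e (HO.x ^ (m + 1)) (m + 1)) (w : W) :
    hW.head (HO.x • w) = 0 := by
  obtain ⟨u, rfl⟩ := hW.equiv.surjective w
  rw [equiv_apply, hW.x_smul_xSum, head_xSum, Fin.cons_zero]

section iso

variable {V' W' : Type} [AddCommGroup V'] [Module k V'] [AddCommGroup W'] [Module k W']
  [Module H W'] [IsScalarTower k H W'] {ρ' : Representation k G V'} {e' : V' →ₗ[k] W'}

/-- `f (e v)` and `e' (head' (f (e v)))` differ by an element of `x W'`, which `f⁻¹` maps into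
`x W ⊆ ker head`. -/
theorem leftInverse_head {m m' : ℕ} {c' : H} (hW : IsStdQuot HO ρ e (HO.x ^ (m + 1)) (m + 1))
    (hW' : IsStdQuot HO ρ' e' c' (m' + 1)) (f : W ≃ₗ[H] W') :
    Function.LeftInverse (fun v' => hW.head (f.symm (e' v'))) (fun v => hW'.head (f (e v))) := by
  intro v
  dsimp only
  obtain ⟨w', hw'⟩ := hW'.exists_eq_e_head_add_x_smul (f (e v))
  have hsymm : f.symm (e' (hW'.head (f (e v)))) = e v - HO.x • f.symm w' := by
    rw [eq_sub_iff_add_eq, ← map_smul, ← map_add, ← hw', f.symm_apply_apply]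
  rw [hsymm, map_sub, hW.head_e, hW.head_x_smul, sub_zero]

theorem repIso_of_linearEquiv {m m' : ℕ} (hW : IsStdQuot HO ρ e (HO.x ^ (m + 1)) (m + 1))
    (hW' : IsStdQuot HO ρ' e' (HO.x ^ (m' + 1)) (m' + 1)) (f : W ≃ₗ[H] W') : RepIso ρ ρ' :=
  ⟨{ hW'.head ∘ₗ (f.restrictScalars k).toLinearMap ∘ₗ e with
      invFun := fun v' => hW.head (f.symm (e' v'))
      left_inv := hW.leftInverse_head hW' f
      right_inv := hW'.leftInverse_head hW f.symm },
    fun g v => by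
      change hW'.head (f (e (ρ g v))) = ρ' g (hW'.head (f (e v)))
      rw [hW.equivariant, map_smul, hW'.head_of_smul]⟩

theorem nonempty_linearEquiv_of_repIso {m : ℕ}
    (hW : IsStdQuot HO ρ e (HO.x ^ (m + 1)) (m + 1))
    (hW' : IsStdQuot HO ρ' e' (HO.x ^ (m + 1)) (m + 1)) (hρ : RepIso ρ ρ') :
    Nonempty (W ≃ₗ[H] W') := by
  obtain ⟨φ, hφ⟩ := hρ
  let F : W ≃ₗ[k] W' := hW.equiv.symm ≪≫ₗ LinearEquiv.piCongrRight (fun _ => φ) ≪≫ₗ hW'.equiv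
  have hF (u : Fin (m + 1) → V) : F (HO.xSum e (m + 1) u) = HO.xSum e' (m + 1) (φ ∘ u) := by
    change hW'.equiv (LinearEquiv.piCongrRight (fun _ => φ) (hW.equiv.symm (hW.equiv u))) = _
    rw [LinearEquiv.symm_apply_apply]
    rfl
  refine ⟨HO.linearEquivOfCommute F (fun g w => ?_) (fun w => ?_)⟩
  · obtain ⟨u, rfl⟩ := hW.equiv.surjective w
    rw [equiv_apply, hW.of_smul_xSum, hF, hF, hW'.of_smul_xSum]
    congr 1
    funext j
    rw [Function.comp_apply, map_smul, hφ, Function.comp_apply]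
  · obtain ⟨u, rfl⟩ := hW.equiv.surjective w
    rw [equiv_apply, hW.x_smul_xSum, hF, hF, hW'.x_smul_xSum]
    congr 1
    ext j
    cases j using Fin.cases <;> simp [Fin.init]

end iso

end IsStdQuot

theorem stmt_7_general {k G H : Type} [Field k] [Group G] [Ring H] [Algebra k H] {χ : G →* kˣ}
    (HO : HopfOre k G H χ)
    {V V' : Type} [AddCommGroup V] [Module k V] [AddCommGroup V'] [Module k V']
    (ρ : Representation k G V) (hρ : IsSimpleRep ρ)
    (ρ' : Representation k G V') (hρ' : IsSimpleRep ρ')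
    {W W' : Type} [AddCommGroup W] [Module k W] [Module H W] [IsScalarTower k H W]
    [AddCommGroup W'] [Module k W'] [Module H W'] [IsScalarTower k H W']
    (t n : ℕ) (ht : 0 < t)
    (e : V →ₗ[k] W) (hW : IsStdQuot HO ρ e (HO.x ^ t) t)
    (e' : V' →ₗ[k] W') (hW' : IsStdQuot HO ρ' e' (HO.x ^ n) n) :
    Nonempty (W ≃ₗ[H] W') ↔ (t = n ∧ RepIso ρ ρ') := by
  have : Nontrivial V := hρ.1
  have : Nontrivial V' := hρ'.1
  obtain ⟨m, rfl⟩ : ∃ m, t = m + 1 := ⟨t - 1, by omega⟩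
  constructor
  · rintro ⟨f⟩
    obtain rfl : m + 1 = n := hW.eq_of_annihilator_eq hW' f.annihilator_eq
    exact ⟨rfl, hW.repIso_of_linearEquiv hW' f⟩
  · rintro ⟨rfl, hiso⟩
    exact hW.nonempty_linearEquiv_of_repIso hW' hiso

/-- **Corollary 4.4.** Assume `kG` is finite-dimensional and semisimple.  Then
`V_t(i) ≅ V_n(j)` as `H`-modules if and only if `t = n` and `i = j`. -/
theorem stmt_7 {k G H : Type} [Field k] [IsAlgClosed k] [Group G] [Finite G]
    [Ring H] [Algebra k H]
    {χ : G →* kˣ} (a : G) (ha : a ∈ Subgroup.center G) (hχa : χ a ≠ 1)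
    (hss : IsSemisimpleRing (MonoidAlgebra k G))
    (HO : HopfOre k G H χ)
    {V V' : Type} [AddCommGroup V] [Module k V] [FiniteDimensional k V]
    [AddCommGroup V'] [Module k V'] [FiniteDimensional k V']
    (ρ : Representation k G V) (hρ : IsSimpleRep ρ)
    (ρ' : Representation k G V') (hρ' : IsSimpleRep ρ')
    {W W' : Type} [AddCommGroup W] [Module k W] [Module H W] [IsScalarTower k H W]
    [AddCommGroup W'] [Module k W'] [Module H W'] [IsScalarTower k H W']
    (t n : ℕ) (ht : 0 < t) (hn : 0 < n)
    (e : V →ₗ[k] W) (hW : IsStdQuot HO ρ e (HO.x ^ t) t)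
    (e' : V' →ₗ[k] W') (hW' : IsStdQuot HO ρ' e' (HO.x ^ n) n) :
    Nonempty (W ≃ₗ[H] W') ↔ (t = n ∧ RepIso ρ ρ') :=
  stmt_7_general HO ρ hρ ρ' hρ' t n ht e hW e' hW'

end HopfOrePaper
end
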